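/- arXiv:2501.09844 — 3 statements merged into one kernel-verified Lean document; each statement's English description precedes it below -/
import Mathlib

section
/- Let $\theta_{ij} = |S_i\cap S_j|$ for subsets $S_1,\dots,S_n$ of $\{1,\dots,m\}$ and let $0<p<1$. Then the $n\times n$ matrix with entries $p^{-\theta_{ij}}$ is positive semi-definite, and so is the matrix with entries $(1-p)^{-\theta_{ij}}$. -/
/-!
Expanding `q = (q - 1) + 1` gives `q ^ |A ∩ B| = ∑_{T ⊆ A ∩ B} (q - 1) ^ |T|`, so the matrix
`(q ^ |Sᵢ ∩ Sⱼ|)ᵢⱼ` is a combination, with coefficients `(q - 1) ^ |T| ≥ 0` when `q ≥ 1`, of the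
rank-one matrices `vvᵀ` with `v` the indicator vector of `{i | T ⊆ Sᵢ}`. Both matrices of the
theorem are of this form, with `q = p⁻¹` and `q = (1 - p)⁻¹`.
-/

open Finset Matrix

lemma pow_card_eq_sum_powerset {R α : Type*} [CommRing R] (q : R) (s : Finset α) :
    q ^ #s = ∑ t ∈ s.powerset, (q - 1) ^ #t := by
  simpa using (sum_pow_mul_eq_add_pow (q - 1) 1 s).symm

variable {ι α : Type*} [Fintype ι] [Fintype α] [DecidableEq α]

lemma pow_card_inter_eq_sum {R : Type*} [CommRing R] (q : R) (A B : Finset α) :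
    q ^ #(A ∩ B) =
      ∑ t : Finset α, (q - 1) ^ #t * ((if t ⊆ A then 1 else 0) * (if t ⊆ B then 1 else 0)) := by
  rw [pow_card_eq_sum_powerset, ← filter_subset_univ, sum_filter]
  refine sum_congr rfl fun t _ => ?_
  by_cases hA : t ⊆ A <;> by_cases hB : t ⊆ B <;> simp [subset_inter_iff, hA, hB]

theorem posSemidef_pow_card_inter (S : ι → Finset α) {q : ℝ} (hq : 1 ≤ q) :
    (of fun i j => q ^ #(S i ∩ S j)).PosSemidef := by
  set v : Finset α → ι → ℝ := fun t i => if t ⊆ S i then 1 else 0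
  have hsum : (of fun i j => q ^ #(S i ∩ S j)) =
      ∑ t : Finset α, (q - 1) ^ #t • vecMulVec (v t) (star (v t)) := by
    ext i j
    rw [of_apply, Matrix.sum_apply, pow_card_inter_eq_sum q]
    simp [vecMulVec_apply, v]
  rw [hsum]
  exact posSemidef_sum _ fun t _ =>
    (posSemidef_vecMulVec_self_star _).smul (pow_nonneg (sub_nonneg.2 hq) _)

/-- With `θᵢⱼ = |Sᵢ ∩ Sⱼ|` and `0 < p < 1`, both matrices `(p^{-θᵢⱼ})ᵢⱼ` and
`((1-p)^{-θᵢⱼ})ᵢⱼ` are positive semi-definite. -/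
theorem stmt9 (m n : ℕ) (S : Fin n → Finset (Fin m))
    (p : ℝ) (hp0 : 0 < p) (hp1 : p < 1) :
    Matrix.PosSemidef
      (Matrix.of fun i j : Fin n => (p ^ (S i ∩ S j).card)⁻¹) ∧
    Matrix.PosSemidef
      (Matrix.of fun i j : Fin n => ((1 - p) ^ (S i ∩ S j).card)⁻¹) := by
  simp only [← inv_pow]
  exact ⟨posSemidef_pow_card_inter S ((one_le_inv₀ hp0).2 hp1.le),
    posSemidef_pow_card_inter S ((one_le_inv₀ (sub_pos.2 hp1)).2 (sub_le_self _ hp0.le))⟩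
end

section
/- Let $S_1,\dots,S_n\subseteq\{1,\dots,m\}$, $\theta_{ij}=|S_i\cap S_j|$, and $0<p<1$. Define $\Lambda_1 = (p^{-\theta_{ij}}-1)_{ij}$, $\Lambda_0 = ((1-p)^{-\theta_{ij}}-1)_{ij}$, and $\Lambda_\tau = (\mathbb{1}\{S_i\cap S_j\ne\varnothing\})_{ij}$. Then the $2n\times 2n$ block matrix $\begin{pmatrix}\Lambda_1 & \Lambda_\tau\\ \Lambda_\tau & \Lambda_0\end{pmatrix}$ is positive semi-definite. -/
/-!
Expanding `p⁻¹ = 1 + (1 - p) / p` and `(1 - p)⁻¹ = 1 + p / (1 - p)` binomially and counting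
`r`-subsets `W ⊆ Sᵢ ∩ Sⱼ` in place of `choose |Sᵢ ∩ Sⱼ| r`, the block matrix becomes the Gram sum
`∑_{W ≠ ∅} (p (1 - p))^{-|W|} c_W c_Wᵀ`, where `c_W` is supported on the indices `i` with `W ⊆ Sᵢ`
and takes the value `(1 - p)^{|W|}` in the first block and `-(-p)^{|W|}` in the second.
In the off-diagonal blocks this gives `-∑_{∅ ≠ W ⊆ Sᵢ ∩ Sⱼ} (-1)^{|W|}`, which is the indicator of
`Sᵢ ∩ Sⱼ ≠ ∅`. A nonnegative combination of matrices `c cᵀ` is positive semidefinite.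
-/

open Finset Matrix

theorem Finset.sum_powerset_filter_nonempty_pow {α R : Type*} [CommRing R] (T : Finset α) (x : R) :
    ∑ W ∈ T.powerset with W.Nonempty, x ^ #W = (x + 1) ^ #T - 1 := by
  classical
  have h := sum_filter_add_sum_filter_not T.powerset Finset.Nonempty fun W => x ^ #W
  simp only [not_nonempty_iff_eq_empty, filter_eq', empty_mem_powerset, if_true, sum_singleton,
    card_empty, pow_zero] at h
  rw [← sum_pow_mul_eq_add_pow x 1 T, eq_sub_iff_add_eq, h]
  simp

section SubsetVec

variable {α ι R : Type*} [Fintype α] [DecidableEq α] [CommSemiring R]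

def subsetVec (T : ι → Finset α) (φ : ι → ℕ → R) (W : Finset α) : ι → R :=
  fun a => if W ⊆ T a then φ a #W else 0

theorem sum_smul_vecMulVec_subsetVec_apply (T : ι → Finset α) (φ : ι → ℕ → R) (w : ℕ → R)
    (a b : ι) :
    (∑ W ∈ univ with W.Nonempty, w #W • vecMulVec (subsetVec T φ W) (subsetVec T φ W)) a b =
      ∑ W ∈ (T a ∩ T b).powerset with W.Nonempty, w #W * φ a #W * φ b #W := by
  simp only [Matrix.sum_apply, Matrix.smul_apply, vecMulVec_apply, subsetVec,
    ite_zero_mul_ite_zero, smul_eq_mul]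
  simp only [← subset_inter_iff, mul_ite, mul_zero, mul_assoc]
  rw [← sum_filter, filter_filter]
  refine sum_congr ?_ fun _ _ => rfl
  ext W
  simp only [mem_filter, mem_univ, true_and, mem_powerset, and_comm]

end SubsetVec

theorem fromBlocks_eq_sum_smul_vecMulVec {m n : ℕ} (S : Fin n → Finset (Fin m)) {p : ℝ}
    (hp0 : p ≠ 0) (hp1 : p ≠ 1) :
    fromBlocks (of fun i j => (p ^ #(S i ∩ S j))⁻¹ - 1)
        (of fun i j => if (S i ∩ S j).Nonempty then 1 else 0)
        (of fun i j => if (S i ∩ S j).Nonempty then 1 else 0)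
        (of fun i j => ((1 - p) ^ #(S i ∩ S j))⁻¹ - 1) =
      ∑ W ∈ univ with W.Nonempty, ((p * (1 - p)) ^ #W)⁻¹ •
        vecMulVec
          (subsetVec (Sum.elim S S) (Sum.elim (fun _ k => (1 - p) ^ k) fun _ k => -(-p) ^ k) W)
          (subsetVec (Sum.elim S S) (Sum.elim (fun _ k => (1 - p) ^ k) fun _ k => -(-p) ^ k) W) := by
  have hq : 1 - p ≠ 0 := sub_ne_zero.mpr hp1.symm
  have h_indicator (T : Finset (Fin m)) :
      (if T.Nonempty then 1 else 0 : ℝ) = -((-1 + 1) ^ #T - 1) := by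
    rcases T.eq_empty_or_nonempty with rfl | h
    · simp
    · simp [h, h.card_ne_zero]
  ext a b
  rw [sum_smul_vecMulVec_subsetVec_apply (w := fun k => ((p * (1 - p)) ^ k)⁻¹)]
  rcases a with i | i <;> rcases b with j | j <;>
    simp only [fromBlocks_apply₁₁, fromBlocks_apply₁₂, fromBlocks_apply₂₁, fromBlocks_apply₂₂,
      of_apply, Sum.elim_inl, Sum.elim_inr, ← inv_pow, ← mul_pow, mul_neg, neg_mul, neg_neg,
      sum_neg_distrib, sum_powerset_filter_nonempty_pow]
  · rw [show (p * (1 - p))⁻¹ * (1 - p) * (1 - p) + 1 = p⁻¹ by field_simp; ring]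
  · rw [show (p * (1 - p))⁻¹ * (1 - p) * p = 1 by field_simp, h_indicator]
  · rw [show (p * (1 - p))⁻¹ * p * (1 - p) = 1 by field_simp, h_indicator]
  · rw [show (p * (1 - p))⁻¹ * p * p + 1 = (1 - p)⁻¹ by field_simp; ring]

/-- The block matrix `[[Λ₁, Λτ], [Λτ, Λ₀]]` with
`(Λ₁)ᵢⱼ = p^{-|Sᵢ∩Sⱼ|} - 1`, `(Λ₀)ᵢⱼ = (1-p)^{-|Sᵢ∩Sⱼ|} - 1`,
`(Λτ)ᵢⱼ = 1{Sᵢ∩Sⱼ ≠ ∅}` is positive semi-definite. -/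
theorem stmt10 (m n : ℕ) (S : Fin n → Finset (Fin m))
    (p : ℝ) (hp0 : 0 < p) (hp1 : p < 1)
    (Λ1 Λ0 Λτ : Matrix (Fin n) (Fin n) ℝ)
    (hΛ1 : Λ1 = Matrix.of fun i j => (p ^ (S i ∩ S j).card)⁻¹ - 1)
    (hΛ0 : Λ0 = Matrix.of fun i j => ((1 - p) ^ (S i ∩ S j).card)⁻¹ - 1)
    (hΛτ : Λτ = Matrix.of fun i j => if (S i ∩ S j).Nonempty then 1 else 0) :
    Matrix.PosSemidef (Matrix.fromBlocks Λ1 Λτ Λτ Λ0) := by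
  have hq : 0 < 1 - p := sub_pos.mpr hp1
  subst hΛ1 hΛ0 hΛτ
  rw [fromBlocks_eq_sum_smul_vecMulVec S hp0.ne' hp1.ne]
  exact posSemidef_sum _ fun W _ =>
    (posSemidef_vecMulVec_self_star _).smul (by positivity)
end

section
/- Let $Z_1,\dots,Z_m$ be i.i.d. Bernoulli($p$). For subsets $S_i\subseteq\{1,\dots,m\}$ with $|S_i|=s_i$, $C_i = \prod_{k\in S_i}(1-Z_k)$, and fixed reals $w_i$: $\sum_{i=1}^n \frac{w_i C_i}{(1-p)^{s_i}} - \sum_{i=1}^n w_i = \sum_{\ell=1}^{\max_i s_i}\sum_{\substack{W\subseteq\{1,\dots,m\}\\|W|=\ell}} \left(\frac{(-1)^\ell}{(1-p)^\ell}\sum_{i: W\subseteq S_i} w_i\right)\prod_{k\in W}(Z_k - p)$. -/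
open Finset

/-- The real-valued treatment indicator of intervention unit `k`,
for i.i.d. Bernoulli(p) assignments encoded by `ω : Fin m → Bool`. -/
def Z {m : ℕ} (k : Fin m) (ω : Fin m → Bool) : ℝ := if ω k then 1 else 0

/-!
Writing `1 - Zₖ = (1 - p) - Z̃ₖ`, each normalised product `Cᵢ / (1 - p)^{sᵢ}` expands as
`∑_{W ⊆ Sᵢ} (-1)^{|W|} (1 - p)^{-|W|} ∏_{k ∈ W} Z̃ₖ`. Exchanging the sums over `i` and `W`
and grouping the `W` by cardinality gives the right-hand side: `W = ∅` contributes `∑ᵢ wᵢ`,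
and no `W` with `|W| > maxᵢ sᵢ` lies in any `Sᵢ`.
-/

namespace Finset

variable {α ι β K : Type*}

theorem sum_powerset_eq_sum_Icc_sum_powersetCard [AddCommMonoid β] (s : Finset α) {M : ℕ}
    (F : ℕ → Finset α → β) (hF : ∀ t ⊆ s, M < #t → F #t t = 0) :
    ∑ t ∈ s.powerset, F #t t = ∑ ℓ ∈ Icc 0 M, ∑ t ∈ powersetCard ℓ s, F ℓ t := by
  rw [← sum_filter_of_ne (p := fun t => #t ∈ Icc 0 M), ← sum_fiberwise_eq_sum_filter]
  · refine sum_congr rfl fun ℓ _ => ?_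
    rw [powersetCard_eq_filter]
    exact sum_congr rfl fun t ht => by rw [(mem_filter.1 ht).2]
  · intro t ht hne
    simp only [mem_Icc, zero_le, true_and]
    by_contra! hM
    exact hne (hF t (mem_powerset.1 ht) hM)

theorem sum_sum_powerset_comm [Fintype α] [DecidableEq α] [AddCommMonoid β] (s : Finset ι)
    (S : ι → Finset α) (f : ι → Finset α → β) :
    ∑ i ∈ s, ∑ t ∈ (S i).powerset, f i t = ∑ t : Finset α, ∑ i ∈ s with t ⊆ S i, f i t :=
  sum_comm' fun i t => by simp [and_comm]

theorem prod_sub_div_pow_card [Field K] (s : Finset α) {c : K} (hc : c ≠ 0) (y : α → K) :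
    (∏ k ∈ s, (c - y k)) / c ^ #s = ∑ t ∈ s.powerset, (-1) ^ #t / c ^ #t * ∏ k ∈ t, y k := by
  have h : ∀ k ∈ s, (c - y k) / c = 1 + (-1 / c) * y k := fun k _ => by field_simp; ring
  rw [← prod_const, ← prod_div_distrib, prod_congr rfl h, prod_one_add]
  exact sum_congr rfl fun t _ => by rw [prod_mul_distrib, prod_const, div_pow]

end Finset

theorem stmt15_general (m n : ℕ) (p : ℝ) (hp1 : p < 1)
    (S : Fin n → Finset (Fin m)) (w : Fin n → ℝ) (ω : Fin m → Bool) :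
    (∑ i, w i * (∏ k ∈ S i, (1 - Z k ω)) / (1 - p) ^ (S i).card) - ∑ i, w i
      = ∑ ℓ ∈ Finset.Icc 1 ((Finset.univ : Finset (Fin n)).sup fun i => (S i).card),
          ∑ W ∈ Finset.powersetCard ℓ (Finset.univ : Finset (Fin m)),
            ((-1 : ℝ) ^ ℓ / (1 - p) ^ ℓ *
                ∑ i ∈ (Finset.univ : Finset (Fin n)).filter fun i => W ⊆ S i, w i)
              * ∏ k ∈ W, (Z k ω - p) := by
  set M := (univ : Finset (Fin n)).sup fun i => #(S i)
  set F : ℕ → Finset (Fin m) → ℝ := fun ℓ W =>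
    ((-1) ^ ℓ / (1 - p) ^ ℓ * ∑ i with W ⊆ S i, w i) * ∏ k ∈ W, (Z k ω - p)
  have hc : 1 - p ≠ 0 := by linarith
  have expand (i : Fin n) : w i * (∏ k ∈ S i, (1 - Z k ω)) / (1 - p) ^ #(S i)
      = ∑ W ∈ (S i).powerset, w i * ((-1) ^ #W / (1 - p) ^ #W * ∏ k ∈ W, (Z k ω - p)) := by
    simp_rw [mul_div_assoc, ← mul_sum, show ∀ k, 1 - Z k ω = (1 - p) - (Z k ω - p) by intro; ring]
    rw [prod_sub_div_pow_card _ hc]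
  have vanish : ∀ W ⊆ univ, M < #W → F #W W = 0 := by
    intro W _ hW
    refine mul_eq_zero_of_left (mul_eq_zero_of_right _ (sum_eq_zero fun i hi => ?_)) _
    have hWS : #W ≤ #(S i) := card_le_card (mem_filter.1 hi).2
    exact absurd (hWS.trans (le_sup (f := fun i => #(S i)) (mem_univ i))) hW.not_ge
  have hsum : ∑ i, w i * (∏ k ∈ S i, (1 - Z k ω)) / (1 - p) ^ #(S i) = ∑ W, F #W W := by
    rw [sum_congr rfl fun i _ => expand i, sum_sum_powerset_comm]
    refine sum_congr rfl fun W _ => ?_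
    simp only [F, mul_sum, sum_mul]
    exact sum_congr rfl fun i _ => by ring
  have hF0 : F 0 ∅ = ∑ i, w i := by simp [F]
  rw [hsum, ← hF0, ← powerset_univ, sum_powerset_eq_sum_Icc_sum_powersetCard _ F vanish,
    ← insert_Icc_add_one_left_eq_Icc M.zero_le, sum_insert (by simp), powersetCard_zero,
    sum_singleton, add_sub_cancel_left, zero_add]

/-- Random-polynomial decomposition of the centered control-arm
Horvitz–Thompson sum, where `Cᵢ = ∏_{k ∈ Sᵢ} (1 - Zₖ)` and `Z̃ₖ = Zₖ - p`. -/
theorem stmt15 (m n : ℕ) (p : ℝ) (hp0 : 0 < p) (hp1 : p < 1)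
    (S : Fin n → Finset (Fin m)) (w : Fin n → ℝ) (ω : Fin m → Bool) :
    (∑ i, w i * (∏ k ∈ S i, (1 - Z k ω)) / (1 - p) ^ (S i).card) - ∑ i, w i
      = ∑ ℓ ∈ Finset.Icc 1 ((Finset.univ : Finset (Fin n)).sup fun i => (S i).card),
          ∑ W ∈ Finset.powersetCard ℓ (Finset.univ : Finset (Fin m)),
            ((-1 : ℝ) ^ ℓ / (1 - p) ^ ℓ *
                ∑ i ∈ (Finset.univ : Finset (Fin n)).filter fun i => W ⊆ S i, w i)
              * ∏ k ∈ W, (Z k ω - p) :=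
  stmt15_general m n p hp1 S w ω
end
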